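/- Let g : [0,∞) → ℂ be integrable with compact support, and suppose its Laplace transform ĝ(z) = ∫₀^∞ e^{-zr} g(r) dr vanishes at the points Z_s = √s/√2 − i√s/√2 for all s ≥ M₀ (some M₀ > 0). Then g = 0 almost everywhere. -/

import Mathlib

/-!
Extended by zero to `ℝ`, `g` has an entire two-sided Laplace transform `z ↦ ∫ e^{-zr} g(r) dr`,
since its support is compact. The points `Z_s = t (1 - i)`, `t = √s / √2`, fill a ray, so by the
identity theorem the transform vanishes identically. On the imaginary axis it is the Fourier
transform, and an integrable function whose Fourier transform vanishes is zero a.e.: pairing it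
with `𝓕 ψ` for Schwartz functions `ψ` tests it against every smooth compactly supported function.
-/

open MeasureTheory Set Complex Filter Metric
open scoped Topology Real FourierTransform SchwartzMap

variable {E : Type*} [NormedAddCommGroup E] [NormedSpace ℂ E]

theorem Real.ae_eq_zero_of_fourier_eq_zero [CompleteSpace E] {V : Type*} [NormedAddCommGroup V]
    [InnerProductSpace ℝ V] [FiniteDimensional ℝ V] [MeasurableSpace V] [BorelSpace V]
    {f : V → E} (hf : Integrable f) (h : 𝓕 f = 0) : f =ᵐ[volume] 0 := by
  refine ae_eq_zero_of_integral_contDiff_smul_eq_zero hf.locallyIntegrable fun φ hφ hφc => ?_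
  let Φ : 𝓢(V, ℂ) := (hφc.comp_left Complex.ofReal_zero).toSchwartzMap
    (Complex.ofRealCLM.contDiff.comp hφ)
  let ψ : 𝓢(V, ℂ) := 𝓕⁻ Φ
  have hψ : 𝓕 (ψ : V → ℂ) = Φ := by
    rw [← SchwartzMap.fourier_coe, FourierTransform.fourier_fourierInv_eq]
  have hL : (innerₗ V).flip = innerₗ V := by
    ext x y
    exact real_inner_comm x y
  calc ∫ x, φ x • f x = ∫ x, 𝓕 (ψ : V → ℂ) x • f x := by rw [hψ]; rfl
    _ = ∫ ξ, ψ ξ • 𝓕 f ξ := by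
        have := VectorFourier.integral_bilin_fourierIntegral_eq_flip
          (ContinuousLinearMap.lsmul ℂ ℂ) Real.continuous_fourierChar
          (L := innerₗ V) continuous_inner (ψ.integrable (μ := volume)) hf
        simp only [hL, ContinuousLinearMap.lsmul_apply] at this
        exact this
    _ = 0 := by simp [h]

theorem Differentiable.eq_zero_of_eq_zero_on_ray [CompleteSpace E] {F : ℂ → E}
    (hF : Differentiable ℂ F) {w : ℂ} (hw : w ≠ 0) {a : ℝ} (h : ∀ t : ℝ, a ≤ t → F (t * w) = 0) :
    F = 0 := by
  have hray : Tendsto (fun t : ℝ => (t : ℂ) * w) (𝓝[>] a) (𝓝[≠] (a * w)) := by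
    refine tendsto_nhdsWithin_of_tendsto_nhds_of_eventually_within _
      ((Continuous.tendsto (by fun_prop) a).mono_left nhdsWithin_le_nhds) ?_
    filter_upwards [self_mem_nhdsWithin] with t (ht : a < t)
    simpa [hw] using ht.ne'
  have hfreq : ∃ᶠ z in 𝓝[≠] ((a : ℂ) * w), F z = 0 :=
    hray.frequently (eventually_nhdsWithin_of_forall fun t (ht : t ∈ Ioi a) => h t ht.le).frequently
  have hF' : AnalyticOnNhd ℂ F univ := fun z _ => hF.analyticAt z
  funext z
  exact hF'.eqOn_zero_of_preconnected_of_frequently_eq_zero isPreconnected_univ (mem_univ _) hfreq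
    (mem_univ z)

noncomputable def bilateralLaplace (f : ℝ → E) (z : ℂ) : E :=
  ∫ x : ℝ, cexp (-z * x) • f x

theorem bilateralLaplace_indicator (g : ℝ → E) {s : Set ℝ} (hs : MeasurableSet s) (z : ℂ) :
    bilateralLaplace (s.indicator g) z = ∫ x in s, cexp (-z * x) • g x := by
  rw [← integral_indicator hs, bilateralLaplace]
  congr 1 with x
  by_cases hx : x ∈ s <;> simp [hx]

theorem fourier_eq_bilateralLaplace (f : ℝ → E) (ξ : ℝ) :
    𝓕 f ξ = bilateralLaplace f (2 * π * ξ * I) := by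
  rw [Real.fourier_real_eq_integral_exp_smul, bilateralLaplace]
  congr 1 with x
  congr 2
  push_cast
  ring

theorem norm_cexp_neg_mul_ofReal_le {z : ℂ} {x C R : ℝ} (hz : ‖z‖ ≤ C) (hx : |x| ≤ R) :
    ‖cexp (-z * x)‖ ≤ Real.exp (C * R) := by
  rw [norm_exp, Real.exp_le_exp]
  calc (-z * x).re = -(z.re * x) := by simp
    _ ≤ |z.re| * |x| := by rw [← abs_mul]; exact neg_le_abs _
    _ ≤ C * R := mul_le_mul ((abs_re_le_norm z).trans hz) hx (abs_nonneg x)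
        ((norm_nonneg z).trans hz)

theorem differentiable_bilateralLaplace {f : ℝ → E} (hf : Integrable f)
    (hsupp : HasCompactSupport f) : Differentiable ℂ (bilateralLaplace f) := by
  obtain ⟨R, hR⟩ := hsupp.isCompact.isBounded.subset_closedBall 0
  have hfR : ∀ x, f x ≠ 0 → |x| ≤ R := fun x hx => by
    simpa [Real.dist_eq] using hR (subset_tsupport f hx)
  intro z₀
  set C := ‖z₀‖ + 1
  have hball : ∀ z ∈ ball z₀ 1, ‖z‖ ≤ C := fun z hz => by
    have := norm_le_norm_add_norm_sub' z z₀
    rw [mem_ball_iff_norm] at hz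
    simp only [C]; linarith
  have hmeas : ∀ g : ℝ → ℂ, Continuous g → AEStronglyMeasurable (fun x => g x • f x) :=
    fun g hg => hg.aestronglyMeasurable.smul hf.1
  have hF_int : Integrable (fun x : ℝ => cexp (-z₀ * x) • f x) := by
    refine (hf.norm.const_mul (Real.exp (C * R))).mono' (hmeas _ (by fun_prop)) ?_
    refine Eventually.of_forall fun x => ?_
    by_cases hx : f x = 0
    · simp [hx]
    rw [norm_smul]
    gcongr
    exact norm_cexp_neg_mul_ofReal_le (by simp [C]) (hfR x hx)
  have h_bound : ∀ᵐ x : ℝ, ∀ z ∈ ball z₀ 1,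
      ‖(cexp (-z * x) * -x) • f x‖ ≤ Real.exp (C * R) * R * ‖f x‖ := by
    refine Eventually.of_forall fun x z hz => ?_
    by_cases hx : f x = 0
    · simp [hx]
    rw [norm_smul, norm_mul, norm_neg, norm_real, Real.norm_eq_abs]
    gcongr
    · exact norm_cexp_neg_mul_ofReal_le (hball z hz) (hfR x hx)
    · exact hfR x hx
  have h_diff : ∀ᵐ x : ℝ, ∀ z ∈ ball z₀ 1,
      HasDerivAt (fun w => cexp (-w * x) • f x) ((cexp (-z * x) * -x) • f x) z := by
    refine Eventually.of_forall fun x z _ => ?_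
    simpa using (((hasDerivAt_id z).neg.mul_const (x : ℂ)).cexp).smul_const (f x)
  exact (hasDerivAt_integral_of_dominated_loc_of_deriv_le (ball_mem_nhds z₀ one_pos)
    (Eventually.of_forall fun z => hmeas _ (by fun_prop)) hF_int (hmeas _ (by fun_prop))
    h_bound (hf.norm.const_mul _) h_diff).2.differentiableAt

theorem exists_le_sqrt_div_sqrt_two_eq {M₀ t : ℝ} (ht : √M₀ / √2 ≤ t) :
    ∃ s, M₀ ≤ s ∧ √s / √2 = t := by
  have ht0 : 0 ≤ t := (by positivity : 0 ≤ √M₀ / √2).trans ht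
  have h2t : √(2 * t ^ 2) = √2 * t := by rw [Real.sqrt_mul zero_le_two, Real.sqrt_sq ht0]
  refine ⟨2 * t ^ 2, ?_, by rw [h2t]; field_simp⟩
  exact (Real.sqrt_le_sqrt_iff (by positivity)).1 (h2t ▸ (div_le_iff₀' (by positivity)).1 ht)

theorem stmt4_general (g : ℝ → ℂ) (hg : Integrable g) (hsupp : HasCompactSupport g)
    (M₀ : ℝ)
    (hvan : ∀ s : ℝ, M₀ ≤ s →
      ∫ r in Ioi (0:ℝ),
        Complex.exp (-(((Real.sqrt s / Real.sqrt 2 : ℝ) : ℂ)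
          - Complex.I * ((Real.sqrt s / Real.sqrt 2 : ℝ) : ℂ)) * r) * g r = 0) :
    g =ᵐ[volume.restrict (Ici (0:ℝ))] 0 := by
  set f := (Ioi (0:ℝ)).indicator g
  have hf : Integrable f := hg.indicator measurableSet_Ioi
  have hray : ∀ t : ℝ, √M₀ / √2 ≤ t → bilateralLaplace f (t * (1 - I)) = 0 := by
    intro t ht
    obtain ⟨s, hs, rfl⟩ := exists_le_sqrt_div_sqrt_two_eq ht
    rw [bilateralLaplace_indicator g measurableSet_Ioi, ← hvan s hs]
    congr 1 with r
    rw [smul_eq_mul]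
    ring_nf
  have hsupp_f : HasCompactSupport f :=
    hsupp.mono (support_indicator.trans_subset inter_subset_right)
  have hzero : bilateralLaplace f = 0 :=
    (differentiable_bilateralLaplace hf hsupp_f).eq_zero_of_eq_zero_on_ray
      (by simp [sub_eq_zero, Complex.ext_iff]) hray
  have hf0 : f =ᵐ[volume] 0 := Real.ae_eq_zero_of_fourier_eq_zero hf <| funext fun ξ => by
    rw [fourier_eq_bilateralLaplace, hzero]; rfl
  rw [Measure.restrict_congr_set Ioi_ae_eq_Ici.symm]
  exact (indicator_ae_eq_restrict measurableSet_Ioi).symm.trans (ae_restrict_of_ae hf0)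

/-- If `g : [0,∞) → ℂ` is integrable with compact support and its Laplace transform
vanishes at `Z_s = √s/√2 − i √s/√2` for all `s ≥ M₀`, then `g = 0` a.e. on `[0,∞)`. -/
theorem stmt4 (g : ℝ → ℂ) (hg : Integrable g) (hsupp : HasCompactSupport g)
    (M₀ : ℝ) (hM₀ : 0 < M₀)
    (hvan : ∀ s : ℝ, M₀ ≤ s →
      ∫ r in Ioi (0:ℝ),
        Complex.exp (-(((Real.sqrt s / Real.sqrt 2 : ℝ) : ℂ)
          - Complex.I * ((Real.sqrt s / Real.sqrt 2 : ℝ) : ℂ)) * r) * g r = 0) :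
    g =ᵐ[volume.restrict (Ici (0:ℝ))] 0 :=
  stmt4_general g hg hsupp M₀ hvan
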